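/- Let p be an odd prime, ν a positive integer, g ≥ 1, and m = diag(m₁,…,m_g) a diagonal matrix with positive integer entries such that p^ν divides m_g. Let n ∈ ℤ, r = (r₁,…,r_g) ∈ ℤ^g, and set D := det( [[2n, rᵀ],[r, 2m]] ). Assume D ≠ 0 and that λ := ord_p(D) satisfies λ < ν. Then r_g ≠ 0 and λ = Σ_{j=1}^{g−1} ord_p(m_j) + 2·ord_p(r_g). -/

import Mathlib

/-- The determinant of the `(g+1)×(g+1)` block matrix `[[2n, rᵀ],[r, 2m]]`. -/
def blockDet {R : Type*} [CommRing R] (g : ℕ) (n : R) (r : Fin g → R)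
    (m : Matrix (Fin g) (Fin g) R) : R :=
  (Matrix.fromBlocks (Matrix.of fun (_ : Unit) (_ : Unit) => 2 * n)
    (Matrix.of fun (_ : Unit) j => r j) (Matrix.of fun i (_ : Unit) => r i)
    ((2 : R) • m)).det

lemma blockDet_rat (g : ℕ) (n : ℚ) (r mv : Fin g → ℚ) (h : ∀ j, mv j ≠ 0) :
    2 * blockDet g n r (Matrix.diagonal mv) =
      2 ^ g * (4 * n * ∏ j, mv j -
        ∑ j, r j ^ 2 * ∏ k ∈ Finset.univ.erase j, mv k) := by
  classical
  have hdm : (2 : ℚ) • Matrix.diagonal mv = Matrix.diagonal (fun j => 2 * mv j) := by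
    ext i j
    by_cases hij : i = j <;> simp [Matrix.diagonal_apply, hij]
  have hprod : (∏ k, mv k) ≠ 0 := Finset.prod_ne_zero_iff.mpr fun j _ => h j
  have hdet : IsUnit (Matrix.diagonal (fun j => 2 * mv j)).det := by
    rw [Matrix.det_diagonal]
    exact isUnit_iff_ne_zero.mpr
      (Finset.prod_ne_zero_iff.mpr fun j _ => mul_ne_zero two_ne_zero (h j))
  haveI := Matrix.invertibleOfIsUnitDet _ hdet
  letI : Invertible (fun j => 2 * mv j : Fin g → ℚ) :=
    ⟨fun j => (2 * mv j)⁻¹,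
     funext fun j => inv_mul_cancel₀ (mul_ne_zero two_ne_zero (h j)),
     funext fun j => mul_inv_cancel₀ (mul_ne_zero two_ne_zero (h j))⟩
  have hinv : (⅟(fun j => 2 * mv j : Fin g → ℚ)) = fun j => (2 * mv j)⁻¹ := rfl
  unfold blockDet
  rw [hdm, Matrix.det_fromBlocks₂₂, Matrix.det_diagonal, Matrix.invOf_diagonal_eq, hinv,
    Matrix.det_unique]
  have hBC : ((Matrix.of fun (_ : Unit) j => r j) *
      Matrix.diagonal (fun j => (2 * mv j)⁻¹) *
      (Matrix.of fun i (_ : Unit) => r i)) default default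
      = ∑ j, r j * (2 * mv j)⁻¹ * r j := by
    simp [Matrix.mul_apply, Matrix.diagonal_apply, ite_mul, mul_ite,
      Finset.sum_ite_eq, mul_inv]
  rw [Matrix.sub_apply, hBC]
  have step : ∀ j ∈ Finset.univ, r j * (2 * mv j)⁻¹ * r j =
      r j ^ 2 * (∏ k ∈ Finset.univ.erase j, mv k) / (2 * ∏ k, mv k) := by
    intro j _
    rw [eq_div_iff (mul_ne_zero two_ne_zero hprod),
      ← Finset.mul_prod_erase Finset.univ mv (Finset.mem_univ j)]
    field_simp [h j]
  rw [Finset.sum_congr rfl step, ← Finset.sum_div,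
    Finset.prod_mul_distrib, Finset.prod_const, Finset.card_univ, Fintype.card_fin]
  field_simp
  simp only [Matrix.of_apply]
  ring

lemma blockDet_int (g : ℕ) (n : ℤ) (r mv : Fin g → ℤ) (h : ∀ j, mv j ≠ 0) :
    2 * blockDet g n r (Matrix.diagonal mv) =
      2 ^ g * (4 * n * ∏ j, mv j -
        ∑ j, r j ^ 2 * ∏ k ∈ Finset.univ.erase j, mv k) := by
  have key := blockDet_rat g (n : ℚ) (fun j => (r j : ℚ)) (fun j => (mv j : ℚ))
    (fun j => Int.cast_ne_zero.mpr (h j))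
  have hcast : ((blockDet g n r (Matrix.diagonal mv) : ℤ) : ℚ) =
      blockDet g (n : ℚ) (fun j => (r j : ℚ)) (Matrix.diagonal fun j => (mv j : ℚ)) := by
    unfold blockDet
    have h1 : ∀ M : Matrix (Unit ⊕ Fin g) (Unit ⊕ Fin g) ℤ,
        ((M.det : ℤ) : ℚ) = (Int.castRingHom ℚ) M.det := fun _ => rfl
    rw [h1, RingHom.map_det, RingHom.mapMatrix_apply]
    congr 1
    ext i j
    rcases i with i | i <;> rcases j with j | j
    · simp [Matrix.map_apply]
    · simp [Matrix.map_apply]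
    · simp [Matrix.map_apply]
    · simp only [Matrix.map_apply, Matrix.fromBlocks_apply₂₂, Matrix.smul_apply,
        Matrix.diagonal_apply, smul_eq_mul]
      by_cases hij : i = j <;> simp [hij]
  rw [← hcast] at key
  push_cast at key
  exact_mod_cast key

lemma padicValInt_prod {p : ℕ} [Fact p.Prime] {ι : Type*} (s : Finset ι) (f : ι → ℤ)
    (h : ∀ i ∈ s, f i ≠ 0) :
    padicValInt p (∏ i ∈ s, f i) = ∑ i ∈ s, padicValInt p (f i) := by
  classical
  induction s using Finset.induction_on with
  | empty => simp [padicValInt]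
  | insert a s hx ih =>
    rw [Finset.prod_insert hx, Finset.sum_insert hx,
      padicValInt.mul (h a (Finset.mem_insert_self a s))
        (Finset.prod_ne_zero_iff.mpr fun i hi => h i (Finset.mem_insert_of_mem hi)),
      ih fun i hi => h i (Finset.mem_insert_of_mem hi)]

/-- Let `p` be an odd prime, `m = diag(m₁,…,m_g)` with positive integer entries and
`p^ν ∣ m_g`. If `D := det [[2n,rᵀ],[r,2m]] ≠ 0` and `λ := ord_p(D) < ν`, then
`r_g ≠ 0` and `λ = ∑_{j=1}^{g-1} ord_p(m_j) + 2·ord_p(r_g)`. -/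
theorem ord_blockDet_eq (p : ℕ) (hp : p.Prime) (hodd : p ≠ 2) (ν : ℕ) (hν : 1 ≤ ν)
    (g : ℕ) (hg : 1 ≤ g) (mv : Fin g → ℤ) (hmv : ∀ j, 0 < mv j)
    (hdvd : (p : ℤ) ^ ν ∣ mv ⟨g - 1, by omega⟩)
    (n : ℤ) (r : Fin g → ℤ) (D : ℤ)
    (hD : D = blockDet g n r (Matrix.diagonal mv)) (hD0 : D ≠ 0)
    (hlam : padicValInt p D < ν) :
    r ⟨g - 1, by omega⟩ ≠ 0 ∧
      padicValInt p D =
        (∑ j ∈ Finset.univ.erase (⟨g - 1, by omega⟩ : Fin g), padicValInt p (mv j)) +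
          2 * padicValInt p (r ⟨g - 1, by omega⟩) := by
  classical
  haveI : Fact p.Prime := ⟨hp⟩
  set jg : Fin g := ⟨g - 1, by omega⟩ with hjg
  set E : ℤ := 4 * n * ∏ j, mv j - ∑ j, r j ^ 2 * ∏ k ∈ Finset.univ.erase j, mv k with hE
  have hmv0 : ∀ j, mv j ≠ 0 := fun j => (hmv j).ne'
  have hkey : 2 * D = 2 ^ g * E := by rw [hD]; exact blockDet_int g n r mv hmv0
  have hE0 : E ≠ 0 := by
    intro h
    rw [h, mul_zero] at hkey
    exact hD0 (by omega)
  -- p does not divide 2^(g+1)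
  have hp2 : ¬ (p : ℤ) ∣ 2 := by
    intro h
    have : p ∣ 2 := by exact_mod_cast h
    exact hodd ((Nat.prime_dvd_prime_iff_eq hp Nat.prime_two).mp this)
  have hval2 : padicValInt p 2 = 0 := padicValInt.eq_zero_of_not_dvd hp2
  have hval2g : padicValInt p (2 ^ g) = 0 := by
    apply padicValInt.eq_zero_of_not_dvd
    intro h
    exact hp2 (Int.Prime.dvd_pow' (by exact_mod_cast hp) h)
  -- val E = val D
  have hvalDE : padicValInt p E = padicValInt p D := by
    have h1 : padicValInt p (2 * D) = padicValInt p D := by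
      rw [padicValInt.mul two_ne_zero hD0, hval2, zero_add]
    have h2 : padicValInt p (2 ^ g * E) = padicValInt p E := by
      rw [padicValInt.mul (pow_ne_zero g two_ne_zero) hE0, hval2g, zero_add]
    rw [← h2, ← hkey, h1]
  set lam : ℕ := padicValInt p D with hlamdef
  -- key divisibility
  set M : ℤ := ∏ k ∈ Finset.univ.erase jg, mv k with hM
  have hdvdsum : (p : ℤ) ^ ν ∣ E + r jg ^ 2 * M := by
    have hsplit : E + r jg ^ 2 * M =
        4 * n * ∏ j, mv j -
          ∑ j ∈ Finset.univ.erase jg, r j ^ 2 * ∏ k ∈ Finset.univ.erase j, mv k := by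
      rw [hE, ← Finset.add_sum_erase Finset.univ _ (Finset.mem_univ jg)]
      ring
    rw [hsplit]
    have h1 : (p : ℤ) ^ ν ∣ 4 * n * ∏ j, mv j :=
      Dvd.dvd.mul_left (hdvd.trans (Finset.dvd_prod_of_mem mv (Finset.mem_univ jg))) _
    have h2 : (p : ℤ) ^ ν ∣
        ∑ j ∈ Finset.univ.erase jg, r j ^ 2 * ∏ k ∈ Finset.univ.erase j, mv k := by
      apply Finset.dvd_sum
      intro j hj
      have hjne : jg ≠ j := (Finset.ne_of_mem_erase hj).symm
      have : jg ∈ Finset.univ.erase j := Finset.mem_erase.mpr ⟨hjne, Finset.mem_univ jg⟩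
      exact Dvd.dvd.mul_left (hdvd.trans (Finset.dvd_prod_of_mem mv this)) _
    exact dvd_sub h1 h2
  -- r jg ≠ 0
  have hM0 : M ≠ 0 := Finset.prod_ne_zero_iff.mpr fun k _ => hmv0 k
  have hr0 : r jg ≠ 0 := by
    intro h
    rw [h] at hdvdsum
    norm_num at hdvdsum
    have : E = 0 ∨ ν ≤ padicValInt p E := (padicValInt_dvd_iff ν E).mp hdvdsum
    rcases this with h' | h'
    · exact hE0 h'
    · rw [hvalDE] at h'; omega
  set F : ℤ := r jg ^ 2 * M with hF
  have hF0 : F ≠ 0 := mul_ne_zero (pow_ne_zero 2 hr0) hM0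
  -- p^lam ∣ F
  have hdvdE : (p : ℤ) ^ lam ∣ E := by rw [← hvalDE]; exact padicValInt_dvd E
  have hlamν : lam ≤ ν := le_of_lt hlam
  have hdvdF : (p : ℤ) ^ lam ∣ F := by
    have h1 : (p : ℤ) ^ lam ∣ E + F := (pow_dvd_pow _ hlamν).trans hdvdsum
    have h2 := dvd_sub h1 hdvdE
    rwa [add_sub_cancel_left] at h2
  -- ¬ p^(lam+1) ∣ F
  have hndvdF : ¬ (p : ℤ) ^ (lam + 1) ∣ F := by
    intro h
    have hEF : (p : ℤ) ^ (lam + 1) ∣ E + F := (pow_dvd_pow _ (by omega)).trans hdvdsum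
    have : (p : ℤ) ^ (lam + 1) ∣ E := by
      have h2 := dvd_sub hEF h
      rwa [add_sub_cancel_right] at h2
    rcases (padicValInt_dvd_iff (lam + 1) E).mp this with h' | h'
    · exact hE0 h'
    · rw [hvalDE] at h'; omega
  have hvalF : padicValInt p F = lam := by
    have h1 : lam ≤ padicValInt p F := by
      rcases (padicValInt_dvd_iff lam F).mp hdvdF with h' | h'
      · exact absurd h' hF0
      · exact h'
    have h2 : padicValInt p F < lam + 1 := by
      by_contra hcon
      exact hndvdF ((padicValInt_dvd_iff (lam + 1) F).mpr (Or.inr (by omega)))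
    omega
  refine ⟨hr0, ?_⟩
  rw [← hvalF, hF, padicValInt.mul (pow_ne_zero 2 hr0) hM0, hM,
    padicValInt_prod _ _ fun k _ => hmv0 k, sq,
    padicValInt.mul hr0 hr0]
  ring
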